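/- Let G be a connected k-regular finite simple graph and λ a real number with λ₂(G) ≤ λ < k. Suppose G contains a nonempty induced subgraph H on s vertices with t edges such that either the average degree of H is at least λ or the spectral radius (largest adjacency eigenvalue) of H is greater than λ. Then the number of vertices of G satisfies |V(G)| ≤ s + ((2k − λ − 1)/(k − λ))·(ks − 2t). -/

import Mathlib

open Polynomial

/-- The adjacency matrix of a simple graph over `ℝ` is Hermitian. -/
theorem adjMatrix_isHermitian {V : Type*} [Fintype V] [DecidableEq V]
    (G : SimpleGraph V) [DecidableRel G.Adj] : (G.adjMatrix ℝ).IsHermitian := by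
  rw [Matrix.IsHermitian, Matrix.conjTranspose_eq_transpose_of_trivial]
  exact G.isSymm_adjMatrix

/-- The multiset of adjacency eigenvalues (with multiplicity) of a finite simple graph. -/
noncomputable def eigMultiset {V : Type*} [Fintype V] [DecidableEq V]
    (G : SimpleGraph V) [DecidableRel G.Adj] : Multiset ℝ :=
  Multiset.map (adjMatrix_isHermitian G).eigenvalues Finset.univ.val

/-- The second largest adjacency eigenvalue (with multiplicity) of a finite simple graph:
the second-to-last entry of the nondecreasing sorted list of eigenvalues. -/
noncomputable def secondEigenvalue {V : Type*} [Fintype V] [DecidableEq V]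
    (G : SimpleGraph V) [DecidableRel G.Adj] : ℝ :=
  ((eigMultiset G).sort (· ≤ ·)).getD (((eigMultiset G).sort (· ≤ ·)).length - 2) 0

/-- The largest adjacency eigenvalue (spectral radius) of a finite simple graph. -/
noncomputable def largestEigenvalue {V : Type*} [Fintype V] [DecidableEq V]
    (G : SimpleGraph V) [DecidableRel G.Adj] : ℝ :=
  ((eigMultiset G).sort (· ≤ ·)).getD (((eigMultiset G).sort (· ≤ ·)).length - 1) 0

/-- The orthogonal polynomials `F_i^{(k)}`. -/
noncomputable def Fpoly (k : ℕ) : ℕ → Polynomial ℝ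
  | 0 => 1
  | 1 => X
  | 2 => X ^ 2 - C (k : ℝ)
  | n + 3 => X * Fpoly k (n + 2) - C ((k : ℝ) - 1) * Fpoly k (n + 1)

/-- `G_i = Σ_{j=0}^i F_j`. -/
noncomputable def Gpoly (k : ℕ) (i : ℕ) : Polynomial ℝ :=
  ∑ j ∈ Finset.range (i + 1), Fpoly k j

/-- The tridiagonal matrix `T(k,t,c)`: superdiagonal `(k, k-1, …, k-1)`,
subdiagonal `(1, …, 1, c)`, diagonal chosen so that every row sums to `k`. -/
noncomputable def Tmat (k t : ℕ) (c : ℝ) : Matrix (Fin t) (Fin t) ℝ :=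
  Matrix.of fun i j =>
    if (j : ℕ) = (i : ℕ) + 1 then (if (i : ℕ) = 0 then (k : ℝ) else (k : ℝ) - 1)
    else if (i : ℕ) = (j : ℕ) + 1 then (if (i : ℕ) = t - 1 then c else 1)
    else if i = j then
      (k : ℝ) - (if (i : ℕ) + 1 < t then (if (i : ℕ) = 0 then (k : ℝ) else (k : ℝ) - 1) else 0)
        - (if 0 < (i : ℕ) then (if (i : ℕ) = t - 1 then c else 1) else 0)
    else 0

/-- `M(k,t,c) = 1 + Σ_{i=0}^{t-3} k (k-1)^i + k (k-1)^{t-2} / c`. -/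
noncomputable def Mbound (k t : ℕ) (c : ℝ) : ℝ :=
  1 + (∑ i ∈ Finset.range (t - 2), (k : ℝ) * ((k : ℝ) - 1) ^ i)
    + (k : ℝ) * ((k : ℝ) - 1) ^ (t - 2) / c

/-- Average degree of the subgraph of `G` induced on a finset `S`:
twice the number of edges divided by the number of vertices. -/
noncomputable def avgDegFinset {V : Type*} [DecidableEq V] (G : SimpleGraph V)
    [DecidableRel G.Adj] (S : Finset V) : ℝ :=
  (∑ v ∈ S, ((S.filter (G.Adj v)).card : ℝ)) / S.card

instance induceDecidableRel {V : Type*} (G : SimpleGraph V) [DecidableRel G.Adj] (s : Set V) :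
    DecidableRel (SimpleGraph.induce s G).Adj := fun a b => decidable_of_iff (G.Adj a b) Iff.rfl

/-!
Split `V` into `S`, the set `N` of outside vertices with a neighbour in `S`, and the set `C`
of vertices at distance at least two from `S`; let `e = ks - 2t` be the number of edges
leaving `S`. Double counting gives `|N| ≤ e` and `(k - λ)|C| ≤ k|C| - 2e(C) ≤ (k - 1)e`, where
`2e(C) ≤ λ|C|` is the spectral input: for a vector `y` supported on `S` with `yᵀAy ≥ λ yᵀy`
and `∑ y ≠ 0` (the indicator of `S`, or a top eigenvector of `H` extended by zero), the vector
`|C| y - (∑ y) 𝟙_C` is orthogonal to `𝟙`, so its Rayleigh quotient is at most `λ₂ ≤ λ`; since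
there are no edges between `S` and `C`, this quotient splits into the two pieces.
-/

theorem Multiset.card_filter_sort_getD_lt_le_one {α : Type*} [LinearOrder α] (M : Multiset α)
    (d : α) :
    (M.filter fun x => (M.sort (· ≤ ·)).getD ((M.sort (· ≤ ·)).length - 2) d < x).card ≤ 1 := by
  set l := M.sort (· ≤ ·)
  have hl : l.SortedLE := List.sortedLE_iff_pairwise.mpr (M.pairwise_sort _)
  set p : α → Prop := fun x => l.getD (l.length - 2) d < x
  have htake : (l.take (l.length - 1)).filter p = [] := by
    rw [List.filter_eq_nil_iff]
    intro x hx
    obtain ⟨i, hi, rfl⟩ := List.mem_take_iff_getElem.mp hx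
    simp only [p, List.getD_eq_getElem _ _ (show l.length - 2 < l.length by omega),
      decide_eq_true_eq, not_lt]
    exact hl.getElem_le_getElem_of_le (by omega)
  nth_rewrite 1 [← M.sort_eq (· ≤ ·)]
  calc (l.filter p).length
      = ((l.take (l.length - 1)).filter p).length + ((l.drop (l.length - 1)).filter p).length := by
        rw [← List.length_append, ← List.filter_append, List.take_append_drop]
    _ ≤ 1 := by
        rw [htake, List.length_nil, zero_add]
        exact (List.length_filter_le _ _).trans (by simp; omega)

namespace Matrix

theorem dotProduct_mulVec_smul_add_smul {n R : Type*} [Fintype n] [CommRing R]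
    (A : Matrix n n R) {y g : n → R} (hyg : y ⬝ᵥ (A *ᵥ g) = 0) (hgy : g ⬝ᵥ (A *ᵥ y) = 0)
    (a b : R) :
    (a • y + b • g) ⬝ᵥ (A *ᵥ (a • y + b • g)) =
      a ^ 2 * (y ⬝ᵥ (A *ᵥ y)) + b ^ 2 * (g ⬝ᵥ (A *ᵥ g)) := by
  simp only [mulVec_add, mulVec_smul, dotProduct_add, add_dotProduct, dotProduct_smul,
    smul_dotProduct, hyg, hgy, smul_eq_mul]
  ring

theorem dotProduct_smul_add_smul_self {n R : Type*} [Fintype n] [CommRing R]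
    {y g : n → R} (hyg : y ⬝ᵥ g = 0) (a b : R) :
    (a • y + b • g) ⬝ᵥ (a • y + b • g) = a ^ 2 * (y ⬝ᵥ y) + b ^ 2 * (g ⬝ᵥ g) := by
  simp only [dotProduct_add, add_dotProduct, dotProduct_smul, smul_dotProduct, hyg,
    dotProduct_comm g y, smul_eq_mul]
  ring

theorem extend_val_dotProduct {V : Type*} [Fintype V] {S : Finset V} (w : ↥(S : Set V) → ℝ)
    (z : V → ℝ) : Subtype.val.extend w 0 ⬝ᵥ z = w ⬝ᵥ fun p => z p := by
  rw [dotProduct, ← Finset.sum_subset (Finset.subset_univ S) fun v _ hv => by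
    rw [Function.extend_apply' _ _ _ fun ⟨p, hp⟩ => hv (hp ▸ p.2), Pi.zero_apply, zero_mul],
    ← Finset.sum_finset_coe]
  simp only [Subtype.val_injective.extend_apply, dotProduct]

namespace IsHermitian

variable {n : Type*} [Fintype n] {A : Matrix n n ℝ}

theorem dotProduct_mulVec_comm (hA : A.IsHermitian) (x y : n → ℝ) :
    x ⬝ᵥ (A *ᵥ y) = (A *ᵥ x) ⬝ᵥ y := by
  rw [dotProduct_mulVec, ← mulVec_transpose, ← conjTranspose_eq_transpose_of_trivial, hA.eq]

variable [DecidableEq n]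

theorem sum_dotProduct_eigenvectorBasis_mul (hA : A.IsHermitian) (x y : n → ℝ) :
    ∑ i, (x ⬝ᵥ hA.eigenvectorBasis i) * (hA.eigenvectorBasis i ⬝ᵥ y) = x ⬝ᵥ y := by
  have := hA.eigenvectorBasis.sum_inner_mul_inner (WithLp.toLp 2 x) (WithLp.toLp 2 y)
  simpa [EuclideanSpace.inner_eq_star_dotProduct, dotProduct_comm] using this

theorem eigenvectorBasis_dotProduct_self (hA : A.IsHermitian) (i : n) :
    hA.eigenvectorBasis i ⬝ᵥ hA.eigenvectorBasis i = 1 := by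
  have h := real_inner_self_eq_norm_sq (hA.eigenvectorBasis i)
  rw [hA.eigenvectorBasis.orthonormal.1 i, one_pow, EuclideanSpace.inner_eq_star_dotProduct] at h
  simpa using h

theorem eigenvalues_eq_dotProduct (hA : A.IsHermitian) (i : n) :
    hA.eigenvalues i = hA.eigenvectorBasis i ⬝ᵥ (A *ᵥ hA.eigenvectorBasis i) := by
  simpa using hA.eigenvalues_eq i

theorem eigenvectorBasis_dotProduct_eq_zero (hA : A.IsHermitian) {u : n → ℝ} {μ : ℝ}
    (hu : A *ᵥ u = μ • u) {i : n} (hi : hA.eigenvalues i ≠ μ) :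
    hA.eigenvectorBasis i ⬝ᵥ u = 0 := by
  have h := hA.dotProduct_mulVec_comm (hA.eigenvectorBasis i) u
  rw [hu, hA.mulVec_eigenvectorBasis, dotProduct_smul, smul_dotProduct, smul_eq_mul,
    smul_eq_mul] at h
  exact (mul_eq_mul_right_iff.mp h.symm).resolve_left hi

theorem dotProduct_mulVec_le (hA : A.IsHermitian) {m : ℝ} {x : n → ℝ}
    (hx : ∀ i, m < hA.eigenvalues i → hA.eigenvectorBasis i ⬝ᵥ x = 0) :
    x ⬝ᵥ (A *ᵥ x) ≤ m * (x ⬝ᵥ x) := by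
  rw [← hA.sum_dotProduct_eigenvectorBasis_mul, ← hA.sum_dotProduct_eigenvectorBasis_mul,
    Finset.mul_sum]
  refine Finset.sum_le_sum fun i _ => ?_
  rw [hA.dotProduct_mulVec_comm, hA.mulVec_eigenvectorBasis, smul_dotProduct, smul_eq_mul,
    dotProduct_comm x]
  rcases le_or_gt (hA.eigenvalues i) m with hle | hlt
  · nlinarith [mul_self_nonneg (hA.eigenvectorBasis i ⬝ᵥ x)]
  · simp [hx i hlt]

/-- Courant–Fischer for the second eigenvalue, with a top eigenvector `u` given explicitly. -/
theorem dotProduct_mulVec_le_of_dotProduct_eq_zero (hA : A.IsHermitian) {u : n → ℝ} {μ m : ℝ}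
    (hu0 : u ≠ 0) (hu : A *ᵥ u = μ • u) (hμ : ∀ i, hA.eigenvalues i ≤ μ)
    (hm : ∀ i j, m < hA.eigenvalues i → m < hA.eigenvalues j → i = j) {x : n → ℝ}
    (hx : u ⬝ᵥ x = 0) : x ⬝ᵥ (A *ᵥ x) ≤ m * (x ⬝ᵥ x) := by
  set b := hA.eigenvectorBasis
  refine hA.dotProduct_mulVec_le fun i hi => ?_
  obtain ⟨j, hj⟩ : ∃ j, b j ⬝ᵥ u ≠ 0 := by
    by_contra! h
    apply hu0
    rw [← dotProduct_self_eq_zero, ← hA.sum_dotProduct_eigenvectorBasis_mul]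
    simp [b, h]
  have hαj : hA.eigenvalues j = μ :=
    not_imp_comm.mp (hA.eigenvectorBasis_dotProduct_eq_zero hu) hj
  obtain rfl : j = i := hm j i (hαj ▸ hi.trans_le (hμ i)) hi
  -- every other eigenvector is orthogonal to `u`, so `u` is a multiple of `b j`
  have hu_eq : u ⬝ᵥ x = (u ⬝ᵥ b j) * (b j ⬝ᵥ x) := by
    rw [← hA.sum_dotProduct_eigenvectorBasis_mul, Finset.sum_eq_single j]
    · intro l _ hl
      have hαl : hA.eigenvalues l ≠ μ := fun h => hl (hm l j (h ▸ hi.trans_le (hμ j)) hi)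
      rw [dotProduct_comm, hA.eigenvectorBasis_dotProduct_eq_zero hu hαl, zero_mul]
    · simp
  rw [hx, eq_comm, mul_eq_zero, dotProduct_comm] at hu_eq
  exact hu_eq.resolve_left hj

end IsHermitian

end Matrix

namespace SimpleGraph

open Matrix Finset

section DartCount

variable {V : Type*} (G : SimpleGraph V) [DecidableRel G.Adj]

def dartCount (X Y : Finset V) : ℕ := ∑ v ∈ X, #(Y.filter (G.Adj v))

variable {G}

theorem dartCount_comm (X Y : Finset V) : G.dartCount X Y = G.dartCount Y X := by
  simp only [dartCount, card_filter]
  rw [sum_comm]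
  simp only [adj_comm]

theorem dartCount_union_right [DecidableEq V] (X : Finset V) {Y₁ Y₂ : Finset V}
    (h : Disjoint Y₁ Y₂) : G.dartCount X (Y₁ ∪ Y₂) = G.dartCount X Y₁ + G.dartCount X Y₂ := by
  simp only [dartCount, ← sum_add_distrib, filter_union]
  exact sum_congr rfl fun v _ => card_union_of_disjoint (disjoint_filter_filter h)

theorem dartCount_eq_zero {X Y : Finset V} (h : ∀ u ∈ X, ∀ v ∈ Y, ¬G.Adj u v) :
    G.dartCount X Y = 0 :=
  sum_eq_zero fun u hu => card_eq_zero.mpr (filter_eq_empty_iff.mpr (h u hu))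

theorem card_le_dartCount {X Y : Finset V} (h : ∀ v ∈ X, ∃ u ∈ Y, G.Adj v u) :
    #X ≤ G.dartCount X Y :=
  card_eq_sum_ones X ▸ sum_le_sum fun v hv =>
    let ⟨u, hu, hvu⟩ := h v hv
    card_pos.mpr ⟨u, mem_filter.mpr ⟨hu, hvu⟩⟩

theorem IsRegularOfDegree.dartCount_add_dartCount_compl [Fintype V] [DecidableEq V] {k : ℕ}
    (hreg : G.IsRegularOfDegree k) (X Y : Finset V) :
    G.dartCount X Y + G.dartCount X Yᶜ = k * #X := by
  rw [← dartCount_union_right X disjoint_compl_right, union_compl, dartCount, mul_comm,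
    ← smul_eq_mul, ← sum_const]
  refine sum_congr rfl fun v _ => ?_
  rw [← neighborFinset_eq_filter, card_neighborFinset_eq_degree, hreg v]

end DartCount

variable {V : Type*} [Fintype V]

section Spectrum

variable [DecidableEq V] {G : SimpleGraph V} [DecidableRel G.Adj]

theorem eq_of_secondEigenvalue_lt_eigenvalues {i j : V}
    (hi : secondEigenvalue G < (adjMatrix_isHermitian G).eigenvalues i)
    (hj : secondEigenvalue G < (adjMatrix_isHermitian G).eigenvalues j) : i = j := by
  have h : #{i | secondEigenvalue G < (adjMatrix_isHermitian G).eigenvalues i} ≤ 1 := by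
    have := (eigMultiset G).card_filter_sort_getD_lt_le_one 0
    rwa [eigMultiset, Multiset.filter_map, Multiset.card_map] at this
  exact card_le_one.mp h i (by simpa using hi) j (by simpa using hj)

theorem largestEigenvalue_mem_eigMultiset [Nonempty V] : largestEigenvalue G ∈ eigMultiset G := by
  have hpos : 0 < ((eigMultiset G).sort (· ≤ ·)).length := by
    simp [eigMultiset, Fintype.card_pos]
  rw [← Multiset.mem_sort (· ≤ ·), largestEigenvalue, List.getD_eq_getElem _ _ (by omega)]
  exact List.getElem_mem _

variable {k : ℕ}

theorem IsRegularOfDegree.dotProduct_mulVec_adjMatrix_le (hreg : G.IsRegularOfDegree k)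
    (x : V → ℝ) : x ⬝ᵥ (G.adjMatrix ℝ *ᵥ x) ≤ k * (x ⬝ᵥ x) := by
  have h := (posSemidef_lapMatrix ℝ G).dotProduct_mulVec_nonneg x
  rw [star_trivial, lapMatrix, sub_mulVec, dotProduct_sub, dotProduct_mulVec_degMatrix] at h
  simp only [hreg _, dotProduct, mul_assoc, ← Finset.mul_sum] at h ⊢
  linarith

theorem IsRegularOfDegree.dotProduct_mulVec_adjMatrix_le_of_secondEigenvalue_le [Nonempty V]
    (hreg : G.IsRegularOfDegree k) {lam : ℝ} (hlam : secondEigenvalue G ≤ lam) (x : V → ℝ)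
    (hx : ∑ v, x v = 0) : x ⬝ᵥ (G.adjMatrix ℝ *ᵥ x) ≤ lam * (x ⬝ᵥ x) := by
  have hA := adjMatrix_isHermitian G
  have hsecond : x ⬝ᵥ (G.adjMatrix ℝ *ᵥ x) ≤ secondEigenvalue G * (x ⬝ᵥ x) := by
    refine hA.dotProduct_mulVec_le_of_dotProduct_eq_zero (u := 1) (μ := k) one_ne_zero ?_ ?_
      (fun _ _ => eq_of_secondEigenvalue_lt_eigenvalues) (by rwa [one_dotProduct])
    · ext v
      simpa using adjMatrix_mulVec_const_apply_of_regular (a := (1 : ℝ)) hreg (v := v)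
    · intro i
      have h := hreg.dotProduct_mulVec_adjMatrix_le (hA.eigenvectorBasis i)
      rwa [← hA.eigenvalues_eq_dotProduct, hA.eigenvectorBasis_dotProduct_self, mul_one] at h
  exact hsecond.trans <|
    mul_le_mul_of_nonneg_right hlam (by simpa using dotProduct_self_star_nonneg x)

end Spectrum

section FarFrom

variable [DecidableEq V] (G : SimpleGraph V) [DecidableRel G.Adj]

def farFrom (S : Finset V) : Finset V := {v | v ∉ S ∧ ∀ u ∈ S, ¬G.Adj u v}

theorem farFrom_subset_compl (S : Finset V) : G.farFrom S ⊆ Sᶜ := fun _ hv =>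
  mem_compl.mpr (mem_filter.mp hv).2.1

theorem disjoint_farFrom (S : Finset V) : Disjoint S (G.farFrom S) :=
  disjoint_of_subset_right (G.farFrom_subset_compl S) disjoint_compl_right

variable {G}

theorem not_adj_of_mem_farFrom {S : Finset V} {u v : V} (hu : u ∈ S) (hv : v ∈ G.farFrom S) :
    ¬G.Adj u v :=
  (mem_filter.mp hv).2.2 u hu

theorem dartCount_compl_sdiff_farFrom_add (X S : Finset V) :
    G.dartCount X (Sᶜ \ G.farFrom S) + G.dartCount X (G.farFrom S) = G.dartCount X Sᶜ := by
  rw [← dartCount_union_right X sdiff_disjoint, sdiff_union_of_subset (G.farFrom_subset_compl S)]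

theorem card_compl_sdiff_farFrom_le (S : Finset V) :
    #(Sᶜ \ G.farFrom S) ≤ G.dartCount S Sᶜ := by
  rw [← dartCount_compl_sdiff_farFrom_add, dartCount_eq_zero fun _ hu _ hv =>
    not_adj_of_mem_farFrom hu hv, add_zero, dartCount_comm]
  refine card_le_dartCount fun v hv => ?_
  obtain ⟨hvS, hvC⟩ := mem_sdiff.mp hv
  have : ¬(v ∉ S ∧ ∀ u ∈ S, ¬G.Adj u v) := fun h => hvC (mem_filter.mpr ⟨mem_univ v, h⟩)
  push Not at this
  obtain ⟨u, hu, huv⟩ := this (mem_compl.mp hvS)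
  exact ⟨u, hu, huv.symm⟩

theorem card_le_card_add_dartCount_compl_add_card_farFrom (S : Finset V) :
    Fintype.card V ≤ #S + G.dartCount S Sᶜ + #(G.farFrom S) := by
  rw [← card_add_card_compl S, ← card_sdiff_add_card_eq_card (G.farFrom_subset_compl S),
    ← add_assoc]
  gcongr
  exact card_compl_sdiff_farFrom_le S

theorem IsRegularOfDegree.mul_card_farFrom_add_dartCount_compl_le {k : ℕ}
    (hreg : G.IsRegularOfDegree k) (S : Finset V) :
    k * #(G.farFrom S) + G.dartCount S Sᶜ ≤
      G.dartCount (G.farFrom S) (G.farFrom S) + k * G.dartCount S Sᶜ := by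
  set C := G.farFrom S
  set N := Sᶜ \ C
  have hSC : G.dartCount S C = 0 := dartCount_eq_zero fun _ hu _ hv => not_adj_of_mem_farFrom hu hv
  have hC := hreg.dartCount_add_dartCount_compl C S
  have hN := hreg.dartCount_add_dartCount_compl N S
  have hSN := dartCount_compl_sdiff_farFrom_add (G := G) S S
  rw [hSC, add_zero] at hSN
  rw [← dartCount_compl_sdiff_farFrom_add, dartCount_comm C S, hSC] at hC
  rw [← dartCount_compl_sdiff_farFrom_add, dartCount_comm N S, hSN] at hN
  have hNC := dartCount_comm (G := G) N C
  have hk : k * #N ≤ k * G.dartCount S Sᶜ := Nat.mul_le_mul_left k (card_compl_sdiff_farFrom_le S)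
  linarith

end FarFrom

section Rayleigh

variable {G : SimpleGraph V} [DecidableRel G.Adj]

theorem extend_val_dotProduct_adjMatrix_mulVec {S : Finset V} (w : ↥(S : Set V) → ℝ) :
    Subtype.val.extend w 0 ⬝ᵥ (G.adjMatrix ℝ *ᵥ Subtype.val.extend w 0) =
      w ⬝ᵥ ((G.induce (S : Set V)).adjMatrix ℝ *ᵥ w) := by
  rw [extend_val_dotProduct]
  congr 1
  ext p
  rw [mulVec, dotProduct_comm, extend_val_dotProduct, mulVec, dotProduct_comm]
  congr 1
  ext q
  simp [adjMatrix_apply]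

variable [DecidableEq V]

theorem adjMatrix_mulVec_indicator_apply (X : Finset V) (v : V) :
    (G.adjMatrix ℝ *ᵥ fun u => if u ∈ X then 1 else 0) v = #(X.filter (G.Adj v)) := by
  rw [adjMatrix_mulVec_apply, sum_boole, neighborFinset_eq_filter, filter_filter]
  congr 2
  ext u
  simp [and_comm]

theorem indicator_dotProduct (X : Finset V) (z : V → ℝ) :
    (fun u => if u ∈ X then 1 else 0) ⬝ᵥ z = ∑ v ∈ X, z v := by
  simp [dotProduct, ite_mul, sum_ite_mem]

theorem indicator_dotProduct_adjMatrix_mulVec_indicator (X Y : Finset V) :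
    (fun u => if u ∈ X then 1 else 0) ⬝ᵥ
      (G.adjMatrix ℝ *ᵥ fun u => if u ∈ Y then 1 else 0) = G.dartCount X Y := by
  rw [indicator_dotProduct, dartCount, Nat.cast_sum]
  exact sum_congr rfl fun v _ => adjMatrix_mulVec_indicator_apply Y v

theorem dartCount_le_of_forall_dotProduct_mulVec_le {lam : ℝ}
    (hray : ∀ x : V → ℝ, ∑ v, x v = 0 → x ⬝ᵥ (G.adjMatrix ℝ *ᵥ x) ≤ lam * (x ⬝ᵥ x))
    {S C : Finset V} (hSC : Disjoint S C) (hadj : ∀ u ∈ S, ∀ v ∈ C, ¬G.Adj u v)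
    {y : V → ℝ} (hy : ∀ v ∉ S, y v = 0) (hysum : ∑ v, y v ≠ 0)
    (hyA : lam * (y ⬝ᵥ y) ≤ y ⬝ᵥ (G.adjMatrix ℝ *ᵥ y)) :
    (G.dartCount C C : ℝ) ≤ lam * #C := by
  set A := G.adjMatrix ℝ
  set g : V → ℝ := fun u => if u ∈ C then 1 else 0
  set W := ∑ v, y v
  have hyAg : y ⬝ᵥ (A *ᵥ g) = 0 := sum_eq_zero fun v _ => by
    by_cases hv : v ∈ S
    · rw [adjMatrix_mulVec_indicator_apply, card_eq_zero.mpr (filter_eq_empty_iff.mpr (hadj v hv)),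
        Nat.cast_zero, mul_zero]
    · rw [hy v hv, zero_mul]
  have hgAy : g ⬝ᵥ (A *ᵥ y) = 0 := by
    rw [(adjMatrix_isHermitian G).dotProduct_mulVec_comm, dotProduct_comm, hyAg]
  have hyg : y ⬝ᵥ g = 0 := sum_eq_zero fun v _ => by
    by_cases hv : v ∈ S
    · simp [g, Finset.disjoint_left.mp hSC hv]
    · rw [hy v hv, zero_mul]
  have hgg : g ⬝ᵥ g = #C := by simp [g, indicator_dotProduct]
  have hgAg : g ⬝ᵥ (A *ᵥ g) = G.dartCount C C := indicator_dotProduct_adjMatrix_mulVec_indicator C C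
  have hx := hray ((#C : ℝ) • y + (-W) • g) (by
    simp only [Pi.add_apply, Pi.smul_apply, smul_eq_mul, sum_add_distrib, ← mul_sum, g, W]
    simp only [mul_one, sum_ite_mem, univ_inter, sum_const, nsmul_eq_mul]
    ring)
  rw [dotProduct_mulVec_smul_add_smul A hyAg hgAy, dotProduct_smul_add_smul_self hyg, hgg,
    hgAg] at hx
  have : W ^ 2 * G.dartCount C C ≤ W ^ 2 * (lam * #C) := by
    nlinarith [mul_le_mul_of_nonneg_left hyA (sq_nonneg (#C : ℝ))]
  exact le_of_mul_le_mul_left this (by positivity)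

theorem exists_supported_rayleigh_ge_of_le_avgDegFinset {lam : ℝ} {S : Finset V}
    (hS : S.Nonempty) (h : lam ≤ avgDegFinset G S) :
    ∃ y : V → ℝ, (∀ v ∉ S, y v = 0) ∧ ∑ v, y v ≠ 0 ∧
      lam * (y ⬝ᵥ y) ≤ y ⬝ᵥ (G.adjMatrix ℝ *ᵥ y) := by
  have hS' : (0 : ℝ) < #S := by exact_mod_cast hS.card_pos
  refine ⟨fun u => if u ∈ S then 1 else 0, fun v hv => if_neg hv, by simpa using hS'.ne', ?_⟩
  rw [indicator_dotProduct_adjMatrix_mulVec_indicator, indicator_dotProduct]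
  rw [avgDegFinset, le_div_iff₀ hS'] at h
  simpa [dartCount] using h

theorem exists_supported_rayleigh_ge_of_lt_largestEigenvalue_induce {lam : ℝ}
    (hray : ∀ x : V → ℝ, ∑ v, x v = 0 → x ⬝ᵥ (G.adjMatrix ℝ *ᵥ x) ≤ lam * (x ⬝ᵥ x))
    {S : Finset V} (hS : S.Nonempty) (h : lam < largestEigenvalue (G.induce (S : Set V))) :
    ∃ y : V → ℝ, (∀ v ∉ S, y v = 0) ∧ ∑ v, y v ≠ 0 ∧
      lam * (y ⬝ᵥ y) ≤ y ⬝ᵥ (G.adjMatrix ℝ *ᵥ y) := by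
  have : Nonempty (S : Set V) := hS.to_set.to_subtype
  have hH := adjMatrix_isHermitian (G.induce (S : Set V))
  obtain ⟨i, -, hi⟩ := Multiset.mem_map.mp (largestEigenvalue_mem_eigMultiset (G := G.induce S))
  set y := Subtype.val.extend (⇑(hH.eigenvectorBasis i)) 0
  have hyy : y ⬝ᵥ y = 1 := by
    rw [extend_val_dotProduct]
    simpa [y, Subtype.val_injective.extend_apply] using hH.eigenvectorBasis_dotProduct_self i
  have hyA : y ⬝ᵥ (G.adjMatrix ℝ *ᵥ y) = largestEigenvalue (G.induce (S : Set V)) := by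
    rw [extend_val_dotProduct_adjMatrix_mulVec, ← hH.eigenvalues_eq_dotProduct]
    exact hi
  refine ⟨y, fun v hv => ?_, fun hsum => ?_, by rw [hyy, hyA, mul_one]; exact h.le⟩
  · exact Function.extend_apply' _ _ _ fun ⟨p, hp⟩ => hv (hp ▸ p.2)
  · have := hray y hsum
    rw [hyy, hyA, mul_one] at this
    exact this.not_gt h

end Rayleigh

end SimpleGraph

theorem stmt16_general {V : Type*} [Fintype V] [DecidableEq V] (G : SimpleGraph V) [DecidableRel G.Adj]
    (k : ℕ) (lam : ℝ) (hreg : G.IsRegularOfDegree k)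
    (hlam : secondEigenvalue G ≤ lam) (hlamk : lam < (k : ℝ))
    (S : Finset V) (hS : S.Nonempty) (s t : ℕ)
    (hs : S.card = s)
    (ht : ∑ v ∈ S, (S.filter (G.Adj v)).card = 2 * t)
    (hH : lam ≤ avgDegFinset G S ∨
      lam < largestEigenvalue (SimpleGraph.induce (↑S : Set V) G)) :
    (Fintype.card V : ℝ) ≤
      (s : ℝ) + (2 * (k : ℝ) - lam - 1) / ((k : ℝ) - lam) * ((k : ℝ) * s - 2 * t) := by
  have := hS.to_type
  have hray := hreg.dotProduct_mulVec_adjMatrix_le_of_secondEigenvalue_le hlam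
  obtain ⟨y, hyS, hysum, hyA⟩ := hH.elim
    (SimpleGraph.exists_supported_rayleigh_ge_of_le_avgDegFinset hS)
    (SimpleGraph.exists_supported_rayleigh_ge_of_lt_largestEigenvalue_induce hray hS)
  have hC := SimpleGraph.dartCount_le_of_forall_dotProduct_mulVec_le hray
    (G.disjoint_farFrom S) (fun _ hu _ hv => SimpleGraph.not_adj_of_mem_farFrom hu hv) hyS hysum hyA
  have hk := hreg.mul_card_farFrom_add_dartCount_compl_le S
  have hV := G.card_le_card_add_dartCount_compl_add_card_farFrom S
  have he := hreg.dartCount_add_dartCount_compl S S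
  rw [show G.dartCount S S = 2 * t from ht, hs] at he
  rw [hs] at hV
  set e := G.dartCount S Sᶜ
  set c := (G.farFrom S).card
  have he' : (e : ℝ) = k * s - 2 * t := by
    rw [eq_sub_iff_add_eq']
    exact_mod_cast he
  have hpos : 0 < (k : ℝ) - lam := sub_pos.mpr hlamk
  have hc : (c : ℝ) ≤ (k - 1) * e / (k - lam) := by
    rw [le_div_iff₀ hpos]
    have : (k : ℝ) * c + e ≤ G.dartCount (G.farFrom S) (G.farFrom S) + k * e := by
      exact_mod_cast hk
    linarith
  calc (Fintype.card V : ℝ) ≤ s + e + c := by exact_mod_cast hV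
    _ ≤ s + e + (k - 1) * e / (k - lam) := by gcongr
    _ = s + (2 * k - lam - 1) / (k - lam) * (k * s - 2 * t) := by
      rw [← he']
      field_simp
      ring

theorem stmt16 {V : Type*} [Fintype V] [DecidableEq V] (G : SimpleGraph V) [DecidableRel G.Adj]
    (k : ℕ) (lam : ℝ) (hconn : G.Connected) (hreg : G.IsRegularOfDegree k)
    (hlam : secondEigenvalue G ≤ lam) (hlamk : lam < (k : ℝ))
    (S : Finset V) (hS : S.Nonempty) (s t : ℕ)
    (hs : S.card = s)
    (ht : ∑ v ∈ S, (S.filter (G.Adj v)).card = 2 * t)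
    (hH : lam ≤ avgDegFinset G S ∨
      lam < largestEigenvalue (SimpleGraph.induce (↑S : Set V) G)) :
    (Fintype.card V : ℝ) ≤
      (s : ℝ) + (2 * (k : ℝ) - lam - 1) / ((k : ℝ) - lam) * ((k : ℝ) * s - 2 * t) :=
  stmt16_general G k lam hreg hlam hlamk S hS s t hs ht hH
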